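/- Let α be irrational and N ≥ 2. Write first = first(N) and last = last(N). For every m with 0 ≤ m < N, define after(m) as the point whose fractional part {after(m)·α} is the smallest among those strictly greater than {m·α} (and after(m) = 0 if {m·α} is maximal). Then: after(m) - m = first if 0 ≤ m < N - first; after(m) - m = first - last if N - first ≤ m < last; and after(m) - m = -last if last ≤ m < N. In particular, the N points {0·α}, {1·α}, ..., {(N-1)·α} partition the circle into gaps of at most three distinct lengths. -/

import Mathlib

/-!
Measured upwards on the circle, the gap from `{m α}` to `{k α}` is `{(k - m) α}`. So `after m` is
`m + d`, where the displacement `d ≠ 0` minimises `{d α}` over the window `-m ≤ d < N - m`. Over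
`0 < d < N` the extremes of `{d α}` sit at `first` and `last`, and over `-N < d < 0` (where
`{d α} = 1 - {-d α}`) at `-last` and `-first`. A short comparison shows that the minimiser over the
window is `first`, `first - last` or `-last`, according to which of them lies in the window.
The case `-last` is the case `first` for `-α`, under which `first` and `last` trade places.
-/

namespace Int

variable {R : Type*} [Ring R] [LinearOrder R] [IsStrictOrderedRing R] [FloorRing R]

theorem fract_sub_of_fract_le {a b : R} (h : fract b ≤ fract a) :
    fract (a - b) = fract a - fract b :=
  fract_eq_iff.2 ⟨sub_nonneg.2 h, (sub_le_self _ (fract_nonneg b)).trans_lt (fract_lt_one a),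
    ⌊a⌋ - ⌊b⌋, by push_cast; unfold fract; abel⟩

theorem fract_sub_of_fract_lt {a b : R} (h : fract a < fract b) :
    fract (a - b) = fract a - fract b + 1 :=
  fract_eq_iff.2 ⟨by simpa [sub_add_eq_add_sub, sub_nonneg] using
      (fract_lt_one b).le.trans (le_add_of_nonneg_left (fract_nonneg a)),
    by simpa [sub_add_eq_add_sub, sub_lt_iff_lt_add, add_comm] using h,
    ⌊a⌋ - ⌊b⌋ - 1, by push_cast; unfold fract; abel⟩

end Int

namespace Irrational

variable {α : ℝ}

theorem fract_intCast_mul_pos (hα : Irrational α) {d : ℤ} (hd : d ≠ 0) :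
    0 < Int.fract ((d : ℝ) * α) :=
  Int.fract_pos.2 ((hα.intCast_mul hd).ne_int _)

theorem fract_natCast_mul_pos (hα : Irrational α) {n : ℕ} (hn : n ≠ 0) :
    0 < Int.fract ((n : ℝ) * α) := by
  simpa using hα.fract_intCast_mul_pos (d := n) (by omega)

theorem fract_natCast_mul_injective (hα : Irrational α) :
    Function.Injective fun n : ℕ => Int.fract ((n : ℝ) * α) := by
  intro a b hab
  by_contra hne
  have hdiff := hα.fract_intCast_mul_pos (d := (a : ℤ) - b) (by omega)
  simp only at hab
  rw [Int.cast_sub, sub_mul, Int.cast_natCast, Int.cast_natCast,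
    Int.fract_sub_of_fract_le hab.ge, hab, sub_self] at hdiff
  exact lt_irrefl _ hdiff

end Irrational

def IsFirst (α : ℝ) (N f : ℕ) : Prop :=
  ∀ m : ℕ, 0 < m → m < N → Int.fract (f * α) ≤ Int.fract (m * α)

def IsLast (α : ℝ) (N l : ℕ) : Prop :=
  ∀ m : ℕ, 0 < m → m < N → Int.fract (m * α) ≤ Int.fract (l * α)

def IsNextPoint (α : ℝ) (N m a : ℕ) : Prop :=
  a < N ∧
  ((∃ k : ℕ, k < N ∧ Int.fract (m * α) < Int.fract (k * α)) →
    Int.fract (m * α) < Int.fract (a * α) ∧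
    ∀ k : ℕ, k < N → Int.fract (m * α) < Int.fract (k * α) →
      Int.fract (a * α) ≤ Int.fract (k * α)) ∧
  ((∀ k : ℕ, k < N → Int.fract (k * α) ≤ Int.fract (m * α)) → a = 0)

section ThreeGap

variable {α : ℝ} {N : ℕ}

theorem IsFirst.fract_lt (hα : Irrational α) {f : ℕ} (hf : IsFirst α N f) {m : ℕ} (h0 : 0 < m)
    (hm : m < N) (hmf : m ≠ f) : Int.fract (f * α) < Int.fract (m * α) :=
  (hf m h0 hm).lt_of_ne (hα.fract_natCast_mul_injective.ne hmf.symm)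

theorem IsLast.fract_lt (hα : Irrational α) {l : ℕ} (hl : IsLast α N l) {m : ℕ} (h0 : 0 < m)
    (hm : m < N) (hml : m ≠ l) : Int.fract (m * α) < Int.fract (l * α) :=
  (hl m h0 hm).lt_of_ne (hα.fract_natCast_mul_injective.ne hml)

theorem IsLast.neg (hα : Irrational α) {l : ℕ} (hl : IsLast α N l) : IsFirst (-α) N l := by
  intro m h0 hm
  have hpos := hα.fract_natCast_mul_pos h0.ne'
  have hle := hl m h0 hm
  rw [mul_neg, mul_neg, Int.fract_neg (by linarith), Int.fract_neg hpos.ne']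
  linarith

theorem IsFirst.fract_le (hα : Irrational α) {f : ℕ} (hf : IsFirst α N f) {d : ℤ} (hd0 : d ≠ 0)
    (hlo : f - N < d) (hhi : d < N) :
    Int.fract (((f : ℤ) : ℝ) * α) ≤ Int.fract ((d : ℝ) * α) := by
  rw [Int.cast_natCast]
  rcases hd0.lt_or_gt with hneg | hpos
  · obtain ⟨e, rfl⟩ := Int.exists_eq_neg_ofNat hneg.le
    by_contra! hlt
    have hfe := hf (f + e) (by omega) (by omega)
    rw [show ((f + e : ℕ) : ℝ) * α = f * α - ((-e : ℤ) : ℝ) * α by push_cast; ring,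
      Int.fract_sub_of_fract_le hlt.le] at hfe
    linarith [hα.fract_intCast_mul_pos hd0]
  · lift d to ℕ using hpos.le
    simpa using hf d (by omega) (by omega)

theorem IsLast.fract_neg_le (hα : Irrational α) {l : ℕ} (hl : IsLast α N l) {d : ℤ} (hd0 : d ≠ 0)
    (hlo : -N < d) (hhi : d < N - l) :
    Int.fract (((-l : ℤ) : ℝ) * α) ≤ Int.fract ((d : ℝ) * α) := by
  have key := (hl.neg hα).fract_le hα.neg (d := -d) (by omega) (by omega) (by omega)
  convert key using 2 <;> push_cast <;> ring

theorem IsFirst.fract_sub_le (hα : Irrational α) {f l : ℕ} (hf : IsFirst α N f)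
    (hl : IsLast α N l) (hfN : f ≤ N) (hlN : l ≤ N) {d : ℤ} (hd0 : d ≠ 0) (hlo : -l < d)
    (hhi : d < f) : Int.fract ((((f : ℤ) - l : ℤ) : ℝ) * α) ≤ Int.fract ((d : ℝ) * α) := by
  have hsub : Int.fract ((((f : ℤ) - l : ℤ) : ℝ) * α)
      ≤ Int.fract ((f : ℝ) * α) - Int.fract ((l : ℝ) * α) + 1 := by
    have := Int.fract_add_fract_le ((((f : ℤ) - l : ℤ) : ℝ) * α) ((l : ℝ) * α)
    rw [show (((f : ℤ) - l : ℤ) : ℝ) * α + l * α = f * α by push_cast; ring] at this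
    linarith
  rcases hd0.lt_or_gt with hneg | hpos
  · obtain ⟨e, rfl⟩ := Int.exists_eq_neg_ofNat hneg.le
    calc _ ≤ Int.fract ((f : ℝ) * α) - Int.fract ((l : ℝ) * α) + 1 := hsub
      _ ≤ Int.fract (((l - e : ℕ) : ℝ) * α) - Int.fract ((l : ℝ) * α) + 1 := by
        gcongr; exact hf _ (by omega) (by omega)
      _ = Int.fract (((l - e : ℕ) : ℝ) * α - l * α) :=
        (Int.fract_sub_of_fract_lt (hl.fract_lt hα (by omega) (by omega) (by omega))).symm
      _ = _ := by congr 1; push_cast [show e ≤ l by omega]; ring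
  · lift d to ℕ using hpos.le
    calc _ ≤ Int.fract ((f : ℝ) * α) - Int.fract ((l : ℝ) * α) + 1 := hsub
      _ ≤ Int.fract ((f : ℝ) * α) - Int.fract (((f - d : ℕ) : ℝ) * α) + 1 := by
        gcongr; exact hl _ (by omega) (by omega)
      _ = Int.fract ((f : ℝ) * α - ((f - d : ℕ) : ℝ) * α) :=
        (Int.fract_sub_of_fract_lt (hf.fract_lt hα (by omega) (by omega) (by omega))).symm
      _ = _ := by congr 1; push_cast [show d ≤ f by omega]; ring

theorem IsNextPoint.eq_of_forall_fract_sub_le {m a : ℕ} (h : IsNextPoint α N m a)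
    (hα : Irrational α) {c : ℕ} (hc : c < N) (hcm : c ≠ m)
    (hmin : ∀ k < N, k ≠ m → Int.fract ((c : ℝ) * α - m * α) ≤ Int.fract ((k : ℝ) * α - m * α)) :
    a = c := by
  obtain ⟨haN, hsucc, hmax⟩ := h
  have hinj := hα.fract_natCast_mul_injective
  by_cases hex : ∃ k : ℕ, k < N ∧ Int.fract ((m : ℝ) * α) < Int.fract ((k : ℝ) * α)
  · obtain ⟨hma, ha_le⟩ := hsucc hex
    obtain ⟨k, hk, hmk⟩ := hex
    have hmc : Int.fract ((m : ℝ) * α) < Int.fract ((c : ℝ) * α) := by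
      by_contra! hcm'
      have hkc := hmin k hk (by rintro rfl; exact lt_irrefl _ hmk)
      rw [Int.fract_sub_of_fract_lt (hcm'.lt_of_ne (hinj.ne hcm)),
        Int.fract_sub_of_fract_le hmk.le] at hkc
      linarith [Int.fract_nonneg ((c : ℝ) * α), Int.fract_lt_one ((k : ℝ) * α)]
    have hca := hmin a haN (by rintro rfl; exact lt_irrefl _ hma)
    rw [Int.fract_sub_of_fract_le hmc.le, Int.fract_sub_of_fract_le hma.le,
      sub_le_sub_iff_right] at hca
    exact hinj (le_antisymm (ha_le c hc hmc) hca)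
  · push Not at hex
    rw [hmax hex]
    by_contra hc0
    have hcpos := hα.fract_natCast_mul_pos (Ne.symm hc0)
    have hcm' : Int.fract ((c : ℝ) * α) < Int.fract ((m : ℝ) * α) :=
      (hex c hc).lt_of_ne (hinj.ne hcm)
    have hm0 : m ≠ 0 := by rintro rfl; simp at hcm'; linarith
    have h0 := hmin 0 (by omega) (Ne.symm hm0)
    rw [Int.fract_sub_of_fract_lt hcm',
      Int.fract_sub_of_fract_lt (by simpa using hα.fract_natCast_mul_pos hm0)] at h0
    simp at h0
    linarith

theorem IsNextPoint.sub_eq {m a : ℕ} (h : IsNextPoint α N m a) (hα : Irrational α) {d : ℤ}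
    (hd0 : d ≠ 0) (hlo : 0 ≤ m + d) (hhi : m + d < N)
    (hmin : ∀ e : ℤ, e ≠ 0 → 0 ≤ m + e → m + e < N →
      Int.fract ((d : ℝ) * α) ≤ Int.fract ((e : ℝ) * α)) :
    (a : ℤ) - m = d := by
  obtain ⟨c, hc⟩ := Int.eq_ofNat_of_zero_le hlo
  have hac : a = c := h.eq_of_forall_fract_sub_le hα (by omega) (by omega) fun k hk hkm => by
    have hck : ((c : ℝ) * α - m * α) = (d : ℝ) * α := by
      rw [show (c : ℝ) = ((c : ℤ) : ℝ) by simp, ← hc]; push_cast; ring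
    rw [hck, show (k : ℝ) * α - m * α = (((k : ℤ) - m : ℤ) : ℝ) * α by push_cast; ring]
    exact hmin _ (by omega) (by omega) (by omega)
  omega

end ThreeGap

theorem three_gap_general (α : ℝ) (hα : Irrational α) (N : ℕ)
    (f l : ℕ) (hf0 : 0 < f) (hfN : f < N)
    (hf : ∀ m : ℕ, 0 < m → m < N → Int.fract (f * α) ≤ Int.fract (m * α))
    (hl0 : 0 < l) (hlN : l < N)
    (hl : ∀ m : ℕ, 0 < m → m < N → Int.fract (m * α) ≤ Int.fract (l * α))
    (after : ℕ → ℕ)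
    (hafter : ∀ m : ℕ, m < N →
      (after m < N) ∧
      ((∃ k : ℕ, k < N ∧ Int.fract (m * α) < Int.fract (k * α)) →
        Int.fract (m * α) < Int.fract (after m * α) ∧
        ∀ k : ℕ, k < N → Int.fract (m * α) < Int.fract (k * α) →
          Int.fract (after m * α) ≤ Int.fract (k * α)) ∧
      ((∀ k : ℕ, k < N → Int.fract (k * α) ≤ Int.fract (m * α)) → after m = 0)) :
    ∀ m : ℕ, m < N →
      ((m < N - f → (after m : ℤ) - m = f) ∧
       (N - f ≤ m → m < l → (after m : ℤ) - m = (f : ℤ) - l) ∧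
       (l ≤ m → (after m : ℤ) - m = -(l : ℤ))) := by
  intro m hm
  have hnext : IsNextPoint α N m (after m) := hafter m hm
  refine ⟨fun hm1 => ?_, fun hm2 hml => ?_, fun hlm => ?_⟩
  · exact hnext.sub_eq hα (by omega) (by omega) (by omega) fun e he0 he1 he2 =>
      IsFirst.fract_le hα hf he0 (by omega) (by omega)
  · have hfl : f ≠ l := by
      rintro rfl
      exact absurd (IsLast.fract_lt hα hl (by omega) hm hml.ne) (not_lt.2 (hf m (by omega) hm))
    exact hnext.sub_eq hα (by omega) (by omega) (by omega) fun e he0 he1 he2 =>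
      IsFirst.fract_sub_le hα hf hl hfN.le hlN.le he0 (by omega) (by omega)
  · exact hnext.sub_eq hα (by omega) (by omega) (by omega) fun e he0 he1 he2 =>
      IsLast.fract_neg_le hα hl he0 (by omega) (by omega)

theorem three_gap (α : ℝ) (hα : Irrational α) (N : ℕ) (hN : 2 ≤ N)
    (f l : ℕ) (hf0 : 0 < f) (hfN : f < N)
    (hf : ∀ m : ℕ, 0 < m → m < N → Int.fract (f * α) ≤ Int.fract (m * α))
    (hl0 : 0 < l) (hlN : l < N)
    (hl : ∀ m : ℕ, 0 < m → m < N → Int.fract (m * α) ≤ Int.fract (l * α))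
    (after : ℕ → ℕ)
    (hafter : ∀ m : ℕ, m < N →
      (after m < N) ∧
      ((∃ k : ℕ, k < N ∧ Int.fract (m * α) < Int.fract (k * α)) →
        Int.fract (m * α) < Int.fract (after m * α) ∧
        ∀ k : ℕ, k < N → Int.fract (m * α) < Int.fract (k * α) →
          Int.fract (after m * α) ≤ Int.fract (k * α)) ∧
      ((∀ k : ℕ, k < N → Int.fract (k * α) ≤ Int.fract (m * α)) → after m = 0)) :
    ∀ m : ℕ, m < N →
      ((m < N - f → (after m : ℤ) - m = f) ∧
       (N - f ≤ m → m < l → (after m : ℤ) - m = (f : ℤ) - l) ∧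
       (l ≤ m → (after m : ℤ) - m = -(l : ℤ))) :=
  three_gap_general α hα N f l hf0 hfN hf hl0 hlN hl after hafter
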